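/- For any subsets I, J ⊆ {1,…,2K} with |I| = |J|, if det(X_{I,J}) ≠ 0 then |det(X_{I,J})| = det(X̂_I) = det(X̂_J). -/

import Mathlib

/-!
`X` is a monomial matrix: each row and each column has at most one nonzero entry, and so does
every square submatrix `X_{I,J}`. If `det X_{I,J} ≠ 0`, exactly one term of the Leibniz expansion
survives, given by a bijection `τ` between the rows and the columns with all `X_{i, τ i} ≠ 0`.
Each such entry has absolute value `X̂_i = X̂_{τ i}`, so
`|det X_{I,J}| = ∏_{i ∈ I} X̂_i = ∏_{j ∈ J} X̂_j`.
-/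

open Matrix

/-- The block-diagonal matrix `X = diag(ρ₁,…,ρ_K, C₁,…,C_{K/2})` with
`C_j = [[0, σ_j],[−σ_j, 0]]`. -/
noncomputable def Xmat (K : ℕ) (ρ σ : ℕ → ℝ) : Matrix (Fin (2 * K)) (Fin (2 * K)) ℝ :=
  Matrix.of fun i j =>
    if (i : ℕ) < K then (if (i : ℕ) = (j : ℕ) then ρ i else 0)
    else if (j : ℕ) < K then 0
    else if ((i : ℕ) - K) / 2 = ((j : ℕ) - K) / 2 then
      (if ((i : ℕ) - K) % 2 = 0 ∧ ((j : ℕ) - K) % 2 = 1 then σ (((i : ℕ) - K) / 2)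
       else if ((i : ℕ) - K) % 2 = 1 ∧ ((j : ℕ) - K) % 2 = 0 then -σ (((i : ℕ) - K) / 2)
       else 0)
    else 0

/-- The diagonal matrix `X̂ = diag(ρ₁,…,ρ_K, σ₁, σ₁,…,σ_{K/2}, σ_{K/2})`. -/
noncomputable def Xhat (K : ℕ) (ρ σ : ℕ → ℝ) : Matrix (Fin (2 * K)) (Fin (2 * K)) ℝ :=
  Matrix.diagonal fun i => if (i : ℕ) < K then ρ i else σ (((i : ℕ) - K) / 2)

/-- `subDet X I J` is the determinant of the submatrix of `X` with rows indexed by `I`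
and columns indexed by `J`, both taken in increasing order (defined to be `0` when
`|I| ≠ |J|`; the determinant of an empty matrix is `1`). -/
noncomputable def subDet {n : ℕ} (X : Matrix (Fin n) (Fin n) ℝ) (I J : Finset (Fin n)) : ℝ :=
  if h : J.card = I.card then
    Matrix.det (Matrix.of fun (a b : Fin I.card) =>
      X (I.orderIsoOfFin rfl a).1 (J.orderIsoOfFin h b).1)
  else 0

open Equiv

section MonomialPattern

variable {m R : Type*} [Fintype m] [DecidableEq m]

theorem Matrix.exists_perm_forall_ne_zero_of_det_ne_zero [CommRing R] {M : Matrix m m R}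
    (h : M.det ≠ 0) : ∃ τ : Perm m, ∀ a, M (τ a) a ≠ 0 := by
  rw [det_apply] at h
  obtain ⟨τ, -, hτ⟩ := Finset.exists_ne_zero_of_sum_ne_zero h
  exact ⟨τ, fun a ha => hτ (by
    rw [Finset.prod_eq_zero (f := fun i => M (τ i) i) (Finset.mem_univ a) ha, smul_zero])⟩

theorem Matrix.det_eq_sign_smul_prod_of_forall_ne_zero [CommRing R] {M : Matrix m m R}
    (hcol : ∀ i i' j, M i j ≠ 0 → M i' j ≠ 0 → i = i') {τ : Perm m}
    (hτ : ∀ a, M (τ a) a ≠ 0) : M.det = Perm.sign τ • ∏ a, M (τ a) a := by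
  rw [det_apply]
  refine Finset.sum_eq_single_of_mem τ (Finset.mem_univ τ) fun τ' _ hne => ?_
  obtain ⟨a, ha⟩ : ∃ a, τ' a ≠ τ a := not_forall.mp fun h => hne (Equiv.ext h)
  have hzero : M (τ' a) a = 0 := by_contra fun h0 => ha (hcol _ _ _ h0 (hτ a))
  rw [Finset.prod_eq_zero (f := fun i => M (τ' i) i) (Finset.mem_univ a) hzero, smul_zero]

theorem Matrix.abs_det_eq_prod_and_prod_eq_prod [CommRing R] [LinearOrder R]
    [IsStrictOrderedRing R] {M : Matrix m m R} {r c : m → R}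
    (hcol : ∀ i i' j, M i j ≠ 0 → M i' j ≠ 0 → i = i')
    (habs : ∀ i j, M i j ≠ 0 → |M i j| = r i) (hrc : ∀ i j, M i j ≠ 0 → c j = r i)
    (hdet : M.det ≠ 0) : |M.det| = ∏ i, r i ∧ ∏ i, r i = ∏ j, c j := by
  obtain ⟨τ, hτ⟩ := exists_perm_forall_ne_zero_of_det_ne_zero hdet
  have hr : ∏ i, r i = ∏ a, r (τ a) := (Equiv.prod_comp τ r).symm
  refine ⟨?_, ?_⟩
  · rw [det_eq_sign_smul_prod_of_forall_ne_zero hcol hτ, Units.smul_def, abs_zsmul,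
      Int.isUnit_iff_abs_eq.mp (Perm.sign τ).isUnit, one_smul, Finset.abs_prod, hr]
    exact Finset.prod_congr rfl fun a _ => habs _ _ (hτ a)
  · rw [hr]
    exact Finset.prod_congr rfl fun a _ => (hrc _ _ (hτ a)).symm

end MonomialPattern

theorem Finset.prod_orderIsoOfFin {α M : Type*} [LinearOrder α] [CommMonoid M] (I : Finset α)
    {k : ℕ} (h : I.card = k) (f : α → M) :
    ∏ a, f (I.orderIsoOfFin h a) = ∏ i ∈ I, f i :=
  (Fintype.prod_equiv (I.orderIsoOfFin h).toEquiv _ (fun i : I => f i) fun _ => rfl).trans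
    (I.prod_coe_sort f)

section SubDet

variable {n : ℕ} {X : Matrix (Fin n) (Fin n) ℝ} {I J : Finset (Fin n)}

theorem card_eq_of_subDet_ne_zero (h : subDet X I J ≠ 0) : J.card = I.card := by
  by_contra hne
  exact h (dif_neg hne)

theorem subDet_eq_det_submatrix (h : J.card = I.card) :
    subDet X I J = (X.submatrix (fun a => (I.orderIsoOfFin rfl a : Fin n))
      (fun b => (J.orderIsoOfFin h b : Fin n))).det := by
  rw [subDet, dif_pos h]
  rfl

theorem subDet_diagonal_self (d : Fin n → ℝ) (I : Finset (Fin n)) :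
    subDet (diagonal d) I I = ∏ i ∈ I, d i := by
  rw [subDet_eq_det_submatrix rfl, submatrix_diagonal _ (fun a => (I.orderIsoOfFin rfl a : Fin n))
    (Subtype.val_injective.comp (I.orderIsoOfFin rfl).injective), det_diagonal]
  exact I.prod_orderIsoOfFin rfl d

end SubDet

section Xmat

variable {K : ℕ} {ρ σ : ℕ → ℝ}

def xhatDiag (K : ℕ) (ρ σ : ℕ → ℝ) (i : Fin (2 * K)) : ℝ :=
  if (i : ℕ) < K then ρ i else σ (((i : ℕ) - K) / 2)

theorem Xhat_eq_diagonal : Xhat K ρ σ = diagonal (xhatDiag K ρ σ) := rfl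

theorem Xmat_row_eq_of_ne_zero {i i' j : Fin (2 * K)} (h : Xmat K ρ σ i j ≠ 0)
    (h' : Xmat K ρ σ i' j ≠ 0) : i = i' := by
  apply Fin.ext
  simp only [Xmat, of_apply] at h h'
  split_ifs at h h' <;> first | exact absurd rfl h | exact absurd rfl h' | omega

theorem xhatDiag_eq_of_Xmat_ne_zero {i j : Fin (2 * K)} (h : Xmat K ρ σ i j ≠ 0) :
    xhatDiag K ρ σ j = xhatDiag K ρ σ i := by
  simp only [Xmat, of_apply] at h
  simp only [xhatDiag]
  split_ifs at h ⊢ <;>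
    first | exact absurd rfl h | exact congrArg ρ (by omega) | exact congrArg σ (by omega) | omega

/-- A nonzero entry of the skew part lies in a pair `{K + 2q, K + 2q + 1} ⊆ [K, 2K)`,
whence `q < K / 2`. -/
theorem abs_Xmat_of_ne_zero (hρ : ∀ i < K, 0 < ρ i) (hσ : ∀ j < K / 2, 0 < σ j)
    {i j : Fin (2 * K)} (h : Xmat K ρ σ i j ≠ 0) : |Xmat K ρ σ i j| = xhatDiag K ρ σ i := by
  have hj := j.isLt
  simp only [Xmat, of_apply] at h ⊢
  simp only [xhatDiag]
  split_ifs at h ⊢ <;>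
    first
      | exact absurd rfl h
      | omega
      | exact abs_of_pos (hρ _ (by omega))
      | exact abs_of_pos (hσ _ (by omega))
      | exact (abs_neg _).trans (abs_of_pos (hσ _ (by omega)))

end Xmat

theorem abs_subdet_eq_subdet_hat_general
    (K : ℕ)
    (ρ σ : ℕ → ℝ) (hρ : ∀ i < K, 0 < ρ i) (hσ : ∀ j < K / 2, 0 < σ j)
    (I J : Finset (Fin (2 * K)))
    (h : subDet (Xmat K ρ σ) I J ≠ 0) :
    |subDet (Xmat K ρ σ) I J| = subDet (Xhat K ρ σ) I I ∧
      subDet (Xhat K ρ σ) I I = subDet (Xhat K ρ σ) J J := by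
  have hJI := card_eq_of_subDet_ne_zero h
  rw [subDet_eq_det_submatrix hJI] at h ⊢
  simp only [Xhat_eq_diagonal, subDet_diagonal_self]
  rw [← I.prod_orderIsoOfFin rfl, ← J.prod_orderIsoOfFin hJI]
  exact abs_det_eq_prod_and_prod_eq_prod
    (fun a a' b ha ha' => (I.orderIsoOfFin rfl).injective
      (Subtype.ext (Xmat_row_eq_of_ne_zero ha ha')))
    (fun _ _ hab => abs_Xmat_of_ne_zero hρ hσ hab)
    (fun _ _ hab => xhatDiag_eq_of_Xmat_ne_zero hab) h

/-- If `|I| = |J|` and `det(X_{I,J}) ≠ 0`, then `|det(X_{I,J})| = det(X̂_I) = det(X̂_J)`. -/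
theorem abs_subdet_eq_subdet_hat
    (K : ℕ) (hK : 0 < K) (hKeven : Even K)
    (ρ σ : ℕ → ℝ) (hρ : ∀ i < K, 0 < ρ i) (hσ : ∀ j < K / 2, 0 < σ j)
    (I J : Finset (Fin (2 * K))) (hIJ : I.card = J.card)
    (h : subDet (Xmat K ρ σ) I J ≠ 0) :
    |subDet (Xmat K ρ σ) I J| = subDet (Xhat K ρ σ) I I ∧
      subDet (Xhat K ρ σ) I I = subDet (Xhat K ρ σ) J J :=
  abs_subdet_eq_subdet_hat_general K ρ σ hρ hσ I J h
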